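/- Let G be an α-caterpillar with non-degree-one vertices w_1,…,w_ℓ forming a path. The assignment obtained by filling the stars in order w_1, w_2, … with agents from T1 (first the central vertex, then its degree-one neighbors) until T1 is exhausted and placing the agents of T2 on all remaining vertices is a swap-equilibrium, and it remains a swap-equilibrium after deleting any subset of edges of G. -/

import Mathlib

open SimpleGraph

variable {V : Type*}

/-- Utility of the agent occupying vertex `v` in graph `H` under type assignment `τ`:
the fraction of same-type agents among occupied neighbors (0 if no neighbors). -/
noncomputable def utility (H : SimpleGraph V) (τ : V → Bool) (v : V) : ℚ := by
  classical
  exact if H.neighborSet v = ∅ then 0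
    else ((H.neighborSet v ∩ {w | τ w = τ v}).ncard : ℚ) / ((H.neighborSet v).ncard : ℚ)

/-- The type function after the agents on vertices `i` and `j` exchange their vertices. -/
noncomputable def swapAt (τ : V → Bool) (i j : V) : V → Bool := fun v => by
  classical
  exact if v = i then τ j else if v = j then τ i else τ v

/-- The swap of the (distinct-type) agents on `i` and `j` strictly increases both utilities. -/
def ProfitableSwap (H : SimpleGraph V) (τ : V → Bool) (i j : V) : Prop :=
  τ i ≠ τ j ∧
  utility H τ i < utility H (swapAt τ i j) j ∧
  utility H τ j < utility H (swapAt τ i j) i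

/-- Swap-equilibrium: no profitable swap exists. -/
def IsSwapEq (H : SimpleGraph V) (τ : V → Bool) : Prop :=
  ∀ i j : V, ¬ ProfitableSwap H τ i j

/-- Degree of a vertex (number of neighbors). -/
noncomputable def ndeg (H : SimpleGraph V) (v : V) : ℕ := (H.neighborSet v).ncard

/-!
Call the `T1` agents (type `true`) with a `T2` neighbour the boundary. If it has at most one vertex,
no swap of a `T1` agent on `i` with a `T2` agent on `j` is profitable: if `i` is on the boundary,
any other `T1` neighbour of `j` would be on it too, so the `T1` agent finds no `T1` neighbour at
`j`; if `i` is not, all neighbours of `i` are `T1`, so the `T2` agent arriving at `i` finds no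
`T2` neighbour. Deleting edges only shrinks the boundary, and in the greedy filling of a
caterpillar the boundary is the last `T1` spine vertex (or one end of `G = K₂`).
-/

section Schelling

variable {H G : SimpleGraph V} {τ : V → Bool} {i j v : V}

lemma utility_nonneg (H : SimpleGraph V) (τ : V → Bool) (v : V) : 0 ≤ utility H τ v := by
  unfold utility
  split <;> positivity

lemma utility_eq_zero_of_forall_adj_ne (h : ∀ u, H.Adj v u → τ u ≠ τ v) :
    utility H τ v = 0 := by
  have hempty : H.neighborSet v ∩ {u | τ u = τ v} = ∅ :=
    Set.eq_empty_of_forall_notMem fun u ⟨hu, hτ⟩ => h u hu hτ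
  unfold utility
  split <;> simp [hempty]

lemma swapAt_left (τ : V → Bool) (i j : V) : swapAt τ i j i = τ j := by
  simp [swapAt]

lemma swapAt_right (τ : V → Bool) (h : j ≠ i) : swapAt τ i j j = τ i := by
  simp [swapAt, h]

lemma swapAt_of_ne (τ : V → Bool) (hi : v ≠ i) (hj : v ≠ j) : swapAt τ i j v = τ v := by
  simp [swapAt, hi, hj]

lemma swapAt_comm (τ : V → Bool) (i j : V) : swapAt τ i j = swapAt τ j i := by
  funext v
  unfold swapAt
  split_ifs <;> simp_all

lemma ProfitableSwap.symm (h : ProfitableSwap H τ i j) : ProfitableSwap H τ j i := by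
  obtain ⟨hne, hi, hj⟩ := h
  rw [swapAt_comm] at hi hj
  exact ⟨hne.symm, hj, hi⟩

def trueBoundary (H : SimpleGraph V) (τ : V → Bool) : Set V :=
  {a | τ a = true ∧ ∃ b, H.Adj a b ∧ τ b = false}

lemma trueBoundary_mono (hle : H ≤ G) : trueBoundary H τ ⊆ trueBoundary G τ :=
  fun _ ⟨ha, b, hab, hb⟩ => ⟨ha, b, hle hab, hb⟩

lemma not_profitableSwap_of_trueBoundary_subsingleton
    (hB : (trueBoundary H τ).Subsingleton) (hi : τ i = true) (hj : τ j = false) :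
    ¬ ProfitableSwap H τ i j := by
  rintro ⟨hne, hgain_i, hgain_j⟩
  have hji : j ≠ i := fun h => hne (h ▸ rfl)
  by_cases hiB : i ∈ trueBoundary H τ
  · have hzero : utility H (swapAt τ i j) j = 0 := by
      refine utility_eq_zero_of_forall_adj_ne fun u hu => ?_
      rw [swapAt_right τ hji, hi]
      by_cases hui : u = i
      · rw [hui, swapAt_left, hj]; decide
      · rw [swapAt_of_ne τ hui (H.ne_of_adj hu).symm]
        exact fun hu_true => hui (hB ⟨hu_true, j, hu.symm, hj⟩ hiB)
    linarith [utility_nonneg H τ i]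
  · have hzero : utility H (swapAt τ i j) i = 0 := by
      refine utility_eq_zero_of_forall_adj_ne fun u hu => ?_
      rw [swapAt_left, hj]
      have huj : u ≠ j := by rintro rfl; exact hiB ⟨hi, u, hu, hj⟩
      rw [swapAt_of_ne τ (H.ne_of_adj hu).symm huj]
      exact fun hu_false => hiB ⟨hi, u, hu, hu_false⟩
    linarith [utility_nonneg H τ j]

lemma isSwapEq_of_trueBoundary_subsingleton (hB : (trueBoundary H τ).Subsingleton) :
    IsSwapEq H τ := by
  intro i j hswap
  cases hi : τ i <;> cases hj : τ j
  · exact hswap.1 (hi.trans hj.symm)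
  · exact not_profitableSwap_of_trueBoundary_subsingleton hB hj hi hswap.symm
  · exact not_profitableSwap_of_trueBoundary_subsingleton hB hi hj hswap
  · exact hswap.1 (hi.trans hj.symm)

end Schelling

section Leaves

variable {G : SimpleGraph V} {a b u v : V}

lemma ndeg_eq_one_of_adj [Finite V] (hv : ¬ 1 < ndeg G v) (hadj : G.Adj v u) :
    ndeg G v = 1 := by
  have : 0 < ndeg G v := (Set.ncard_pos (Set.toFinite _)).mpr ⟨u, hadj⟩
  omega

lemma neighborSet_eq_singleton_of_ndeg_eq_one (hv : ndeg G v = 1) (hadj : G.Adj v u) :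
    G.neighborSet v = {u} := by
  obtain ⟨x, hx⟩ := Set.ncard_eq_one.mp hv
  have hu : u ∈ G.neighborSet v := hadj
  rw [hx] at hu ⊢
  rw [Set.mem_singleton_iff.mp hu]

lemma SimpleGraph.Connected.eq_or_eq_of_leaf_adj_leaf (hconn : G.Connected) (ha : ndeg G a = 1)
    (hb : ndeg G b = 1) (hab : G.Adj a b) (v : V) : v = a ∨ v = b := by
  have hreach := (reachable_iff_reflTransGen a v).mp (hconn.preconnected a v)
  induction hreach with
  | refl => exact .inl rfl
  | tail _ hxy ih =>
    rcases ih with rfl | rfl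
    · exact .inr (Set.mem_singleton_iff.mp
        ((neighborSet_eq_singleton_of_ndeg_eq_one ha hab) ▸ hxy))
    · exact .inl (Set.mem_singleton_iff.mp
        ((neighborSet_eq_singleton_of_ndeg_eq_one hb hab.symm) ▸ hxy))

end Leaves

section Caterpillar

variable {G : SimpleGraph V} {ℓ : ℕ} {w : Fin ℓ → V} {τ : V → Bool}

lemma spine_index_le_of_mem_trueBoundary [Finite V]
    (hspine : ∀ v : V, v ∈ Set.range w ↔ 1 < ndeg G v)
    (hpath : ∀ i j : Fin ℓ, G.Adj (w i) (w j) ↔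
      ((i : ℕ) + 1 = (j : ℕ) ∨ (j : ℕ) + 1 = (i : ℕ)))
    (hc1 : ∀ i j : Fin ℓ, i ≤ j → τ (w j) = true → τ (w i) = true)
    (hc3 : ∀ i j : Fin ℓ, i < j → τ (w j) = true →
      ∀ v : V, ndeg G v = 1 → G.Adj v (w i) → τ v = true)
    {k : Fin ℓ} (hk : w k ∈ trueBoundary G τ) {t : Fin ℓ} (ht : τ (w t) = true) : t ≤ k := by
  obtain ⟨hwk, b, hadj, hb⟩ := hk
  by_contra! hkt
  by_cases hb_spine : b ∈ Set.range w
  · obtain ⟨s, rfl⟩ := hb_spine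
    have hs : τ (w s) = true := by
      rcases (hpath k s).mp hadj with h | h
      · exact hc1 s t (Fin.le_def.mpr (by omega)) ht
      · exact hc1 s k (Fin.le_def.mpr (by omega)) hwk
    simp [hs] at hb
  · have hb_leaf := ndeg_eq_one_of_adj ((hspine b).not.mp hb_spine) hadj.symm
    simp [hc3 k t hkt ht b hb_leaf hadj.symm] at hb

lemma eq_of_mem_trueBoundary_of_notMem_range [Finite V] (hconn : G.Connected)
    (hspine : ∀ v : V, v ∈ Set.range w ↔ 1 < ndeg G v)
    (hc2 : ∀ v : V, ndeg G v = 1 → ∀ i : Fin ℓ, G.Adj v (w i) →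
      τ v = true → τ (w i) = true)
    {a a' : V} (ha : a ∈ trueBoundary G τ) (ha_leaf : a ∉ Set.range w)
    (ha' : a' ∈ trueBoundary G τ) : a' = a := by
  obtain ⟨hta, b, hab, hb⟩ := ha
  have hdeg_a := ndeg_eq_one_of_adj ((hspine a).not.mp ha_leaf) hab
  have hb_leaf : b ∉ Set.range w := by
    rintro ⟨s, rfl⟩
    simp [hc2 a hdeg_a s hab hta] at hb
  have hdeg_b := ndeg_eq_one_of_adj ((hspine b).not.mp hb_leaf) hab.symm
  rcases hconn.eq_or_eq_of_leaf_adj_leaf hdeg_a hdeg_b hab a' with h | rfl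
  · exact h
  · exact absurd ha'.1 (by simp [hb])

lemma trueBoundary_subsingleton_of_greedyFill [Finite V] (hconn : G.Connected)
    (hspine : ∀ v : V, v ∈ Set.range w ↔ 1 < ndeg G v)
    (hpath : ∀ i j : Fin ℓ, G.Adj (w i) (w j) ↔
      ((i : ℕ) + 1 = (j : ℕ) ∨ (j : ℕ) + 1 = (i : ℕ)))
    (hc1 : ∀ i j : Fin ℓ, i ≤ j → τ (w j) = true → τ (w i) = true)
    (hc2 : ∀ v : V, ndeg G v = 1 → ∀ i : Fin ℓ, G.Adj v (w i) →
      τ v = true → τ (w i) = true)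
    (hc3 : ∀ i j : Fin ℓ, i < j → τ (w j) = true →
      ∀ v : V, ndeg G v = 1 → G.Adj v (w i) → τ v = true) :
    (trueBoundary G τ).Subsingleton := by
  intro a ha a' ha'
  by_cases ha_spine : a ∈ Set.range w
  · by_cases ha'_spine : a' ∈ Set.range w
    · obtain ⟨k, rfl⟩ := ha_spine
      obtain ⟨k', rfl⟩ := ha'_spine
      exact congrArg w <| le_antisymm
        (spine_index_le_of_mem_trueBoundary hspine hpath hc1 hc3 ha' ha.1)
        (spine_index_le_of_mem_trueBoundary hspine hpath hc1 hc3 ha ha'.1)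
    · exact eq_of_mem_trueBoundary_of_notMem_range hconn hspine hc2 ha' ha'_spine ha
  · exact (eq_of_mem_trueBoundary_of_notMem_range hconn hspine hc2 ha ha_spine ha').symm

end Caterpillar

theorem caterpillar_greedy_fill_fully_edge_robust_general [Fintype V] (G : SimpleGraph V)
    (ℓ : ℕ) (w : Fin ℓ → V)
    (hconn : G.Connected)
    (hspine : ∀ v : V, v ∈ Set.range w ↔ 1 < ndeg G v)
    (hpath : ∀ i j : Fin ℓ, G.Adj (w i) (w j) ↔
      ((i : ℕ) + 1 = (j : ℕ) ∨ (j : ℕ) + 1 = (i : ℕ)))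
    (τ : V → Bool)
    (hc1 : ∀ i j : Fin ℓ, i ≤ j → τ (w j) = true → τ (w i) = true)
    (hc2 : ∀ v : V, ndeg G v = 1 → ∀ i : Fin ℓ, G.Adj v (w i) →
      τ v = true → τ (w i) = true)
    (hc3 : ∀ i j : Fin ℓ, i < j → τ (w j) = true →
      ∀ v : V, ndeg G v = 1 → G.Adj v (w i) → τ v = true) :
    ∀ S : Set (Sym2 V), IsSwapEq (G.deleteEdges S) τ := fun S =>
  isSwapEq_of_trueBoundary_subsingleton <|
    (trueBoundary_subsingleton_of_greedyFill hconn hspine hpath hc1 hc2 hc3).anti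
      (trueBoundary_mono (G.deleteEdges_le S))

/-- Let `G` be an `α`-caterpillar whose vertices of degree `> 1` form a path
`w 0, …, w (ℓ-1)`. The assignment obtained by filling the stars in order with the agents
of `T1` (type `true`) — first the central vertex, then its degree-one neighbors — until
`T1` is exhausted, and placing the agents of `T2` (type `false`) on all remaining
vertices, is a swap-equilibrium, and it remains one after deleting any subset of edges.
The filling order is captured by the conditions `hc1`–`hc3`. -/
theorem caterpillar_greedy_fill_fully_edge_robust [Fintype V] (G : SimpleGraph V)
    (α ℓ : ℕ) (w : Fin ℓ → V)
    (hconn : G.Connected)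
    (hinj : Function.Injective w)
    (hspine : ∀ v : V, v ∈ Set.range w ↔ 1 < ndeg G v)
    (hpath : ∀ i j : Fin ℓ, G.Adj (w i) (w j) ↔
      ((i : ℕ) + 1 = (j : ℕ) ∨ (j : ℕ) + 1 = (i : ℕ)))
    (halpha : ∀ v : V, 1 < ndeg G v →
      {u ∈ G.neighborSet v | 1 < ndeg G u}.ncard + α ≤
        {u ∈ G.neighborSet v | ndeg G u = 1}.ncard)
    (τ : V → Bool)
    (hc1 : ∀ i j : Fin ℓ, i ≤ j → τ (w j) = true → τ (w i) = true)
    (hc2 : ∀ v : V, ndeg G v = 1 → ∀ i : Fin ℓ, G.Adj v (w i) →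
      τ v = true → τ (w i) = true)
    (hc3 : ∀ i j : Fin ℓ, i < j → τ (w j) = true →
      ∀ v : V, ndeg G v = 1 → G.Adj v (w i) → τ v = true) :
    ∀ S : Set (Sym2 V), IsSwapEq (G.deleteEdges S) τ :=
  caterpillar_greedy_fill_fully_edge_robust_general G ℓ w hconn hspine hpath τ hc1 hc2 hc3
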